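/- arXiv:2405.04696 — 2 statements merged into one kernel-verified Lean document; each statement's English description precedes it below -/
import Mathlib

section
/- Let m = 3. If X = (x₁, x₂, x₃) is an ε-equilibrium at separation δ, then F((x₁ + x₃)/2) − F(x₁) ≤ 3(ε + Mδ) and F(x₃) − F((x₁ + x₃)/2) ≤ 3(ε + Mδ). -/
open MeasureTheory Classical

/-- `Fcdf f y = ∫₀^y f`, the mass of voters in `[0, y]`. -/
noncomputable def Fcdf (f : ℝ → ℝ) (y : ℝ) : ℝ := ∫ z in (0:ℝ)..y, f z

/-- Utility (vote share) of a candidate located at `p`, given the set `S` of the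
positions of the other candidates: he receives the voters between the midpoint with his
nearest left neighbour (or `0` if none) and the midpoint with his nearest right
neighbour (or `1` if none). -/
noncomputable def util (f : ℝ → ℝ) (p : ℝ) (S : Set ℝ) : ℝ :=
  Fcdf f (if {s ∈ S | p < s}.Nonempty then (p + sInf {s ∈ S | p < s}) / 2 else 1)
    - Fcdf f (if {s ∈ S | s < p}.Nonempty then (p + sSup {s ∈ S | s < p}) / 2 else 0)

/-- `X = (x₁, x₂, x₃)` (with `x₁ < x₂ < x₃`) is an `ε`-equilibrium at separation `δ`:
no candidate can move to an admissible location (within `[0,1]`, at distance at least `δ`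
from every other candidate) and increase his utility by more than `ε`. -/
def IsEquilibrium3 (f : ℝ → ℝ) (x₁ x₂ x₃ δ ε : ℝ) : Prop :=
  (∀ x' ∈ Set.Icc (0:ℝ) 1, δ ≤ |x' - x₂| → δ ≤ |x' - x₃| →
      util f x' {x₂, x₃} ≤ util f x₁ {x₂, x₃} + ε) ∧
  (∀ x' ∈ Set.Icc (0:ℝ) 1, δ ≤ |x' - x₁| → δ ≤ |x' - x₃| →
      util f x' {x₁, x₃} ≤ util f x₂ {x₁, x₃} + ε) ∧
  (∀ x' ∈ Set.Icc (0:ℝ) 1, δ ≤ |x' - x₁| → δ ≤ |x' - x₂| →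
      util f x' {x₁, x₂} ≤ util f x₃ {x₁, x₂} + ε)


lemma Fcdf_zero (f : ℝ → ℝ) : Fcdf f 0 = 0 := by
  simp [Fcdf]

lemma pair_gt (a b p : ℝ) (h1 : a < p) (h2 : p < b) :
    {s ∈ ({a, b} : Set ℝ) | p < s} = {b} := by
  ext s
  simp only [Set.mem_setOf_eq, Set.mem_insert_iff, Set.mem_singleton_iff]
  constructor
  · rintro ⟨rfl | rfl, h⟩
    · linarith
    · rfl
  · rintro rfl
    exact ⟨Or.inr rfl, h2⟩

lemma pair_lt (a b p : ℝ) (h1 : a < p) (h2 : p < b) :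
    {s ∈ ({a, b} : Set ℝ) | s < p} = {a} := by
  ext s
  simp only [Set.mem_setOf_eq, Set.mem_insert_iff, Set.mem_singleton_iff]
  constructor
  · rintro ⟨rfl | rfl, h⟩
    · rfl
    · linarith
  · rintro rfl
    exact ⟨Or.inl rfl, h1⟩

lemma util_mid (f : ℝ → ℝ) (a b p : ℝ) (h1 : a < p) (h2 : p < b) :
    util f p {a, b} = Fcdf f ((p + b) / 2) - Fcdf f ((p + a) / 2) := by
  unfold util
  rw [pair_gt a b p h1 h2, pair_lt a b p h1 h2]
  simp

lemma util_left (f : ℝ → ℝ) (p a b : ℝ) (hpa : p < a) (hab : a < b) :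
    util f p {a, b} = Fcdf f ((p + a) / 2) := by
  unfold util
  have h1 : {s ∈ ({a, b} : Set ℝ) | p < s} = {a, b} := by
    ext s
    simp only [Set.mem_setOf_eq, Set.mem_insert_iff, Set.mem_singleton_iff]
    constructor
    · rintro ⟨h, _⟩; exact h
    · rintro (rfl | rfl)
      · exact ⟨Or.inl rfl, hpa⟩
      · exact ⟨Or.inr rfl, by linarith⟩
  have h2 : {s ∈ ({a, b} : Set ℝ) | s < p} = ∅ := by
    ext s
    simp only [Set.mem_setOf_eq, Set.mem_insert_iff, Set.mem_singleton_iff,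
      Set.mem_empty_iff_false, iff_false, not_and]
    rintro (rfl | rfl) <;> intro h <;> linarith
  rw [h1, h2]
  rw [if_pos (by exact ⟨a, Or.inl rfl⟩), if_neg (by simp), csInf_pair,
    min_eq_left hab.le, Fcdf_zero, sub_zero]

lemma util_right (f : ℝ → ℝ) (p a b : ℝ) (hab : a < b) (hbp : b < p) :
    util f p {a, b} = Fcdf f 1 - Fcdf f ((p + b) / 2) := by
  unfold util
  have h1 : {s ∈ ({a, b} : Set ℝ) | p < s} = ∅ := by
    ext s
    simp only [Set.mem_setOf_eq, Set.mem_insert_iff, Set.mem_singleton_iff,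
      Set.mem_empty_iff_false, iff_false, not_and]
    rintro (rfl | rfl) <;> intro h <;> linarith
  have h2 : {s ∈ ({a, b} : Set ℝ) | s < p} = {a, b} := by
    ext s
    simp only [Set.mem_setOf_eq, Set.mem_insert_iff, Set.mem_singleton_iff]
    constructor
    · rintro ⟨h, _⟩; exact h
    · rintro (rfl | rfl)
      · exact ⟨Or.inl rfl, by linarith⟩
      · exact ⟨Or.inr rfl, hbp⟩
  rw [h1, h2]
  rw [if_neg (by simp), if_pos (by exact ⟨a, Or.inl rfl⟩), csSup_pair,
    max_eq_right hab.le]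

/-- In any ε-equilibrium with three candidates, the votes between `x₁`
and the midpoint of `x₁, x₃`, and between that midpoint and `x₃`, are each at most
`3(ε + Mδ)`. -/
theorem stmt3 (f : ℝ → ℝ) (M δ ε x₁ x₂ x₃ : ℝ)
    (hM : 0 < M)
    (hfi : IntervalIntegrable f volume 0 1)
    (hf0 : ∀ z ∈ Set.Icc (0:ℝ) 1, 0 ≤ f z)
    (hfM : ∀ z ∈ Set.Icc (0:ℝ) 1, f z ≤ M)
    (hf1 : (∫ z in (0:ℝ)..1, f z) = 1)
    (hδ : 0 < δ) (hMδ : M * δ < 1/1000)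
    (h0 : 0 ≤ x₁) (h12 : x₁ + δ ≤ x₂) (h23 : x₂ + δ ≤ x₃) (h3 : x₃ ≤ 1)
    (heq : IsEquilibrium3 f x₁ x₂ x₃ δ ε) :
    Fcdf f ((x₁ + x₃) / 2) - Fcdf f x₁ ≤ 3 * (ε + M * δ) ∧
    Fcdf f x₃ - Fcdf f ((x₁ + x₃) / 2) ≤ 3 * (ε + M * δ) := by
  obtain ⟨heq1, heq2, heq3⟩ := heq
  have hx12 : x₁ < x₂ := by linarith
  have hx23 : x₂ < x₃ := by linarith
  have hF1 : Fcdf f 1 = 1 := hf1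
  have hMδnn : 0 ≤ M * δ := by positivity
  -- basic integral facts
  have hsub : ∀ a b : ℝ, 0 ≤ a → a ≤ b → b ≤ 1 →
      Fcdf f b - Fcdf f a = ∫ z in a..b, f z := by
    intro a b ha hab hb1
    have hmem : ∀ c : ℝ, 0 ≤ c → c ≤ 1 → c ∈ Set.uIcc (0:ℝ) 1 := by
      intro c h1 h2
      rw [Set.uIcc_of_le (by norm_num)]
      exact ⟨h1, h2⟩
    have hia : IntervalIntegrable f volume 0 a :=
      hfi.mono_set (Set.uIcc_subset_uIcc (hmem 0 le_rfl (by norm_num))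
        (hmem a ha (by linarith)))
    have hib : IntervalIntegrable f volume 0 b :=
      hfi.mono_set (Set.uIcc_subset_uIcc (hmem 0 le_rfl (by norm_num))
        (hmem b (by linarith) hb1))
    exact intervalIntegral.integral_interval_sub_left hib hia
  have hmono : ∀ a b : ℝ, 0 ≤ a → a ≤ b → b ≤ 1 → Fcdf f a ≤ Fcdf f b := by
    intro a b ha hab hb1
    have h := hsub a b ha hab hb1
    have h2 : 0 ≤ ∫ z in a..b, f z :=
      intervalIntegral.integral_nonneg hab
        (fun u hu => hf0 u ⟨le_trans ha hu.1, le_trans hu.2 hb1⟩)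
    linarith
  have key : ∀ a b : ℝ, 0 ≤ a → a ≤ b → b ≤ 1 → b - a ≤ δ →
      Fcdf f b - Fcdf f a ≤ M * δ := by
    intro a b ha hab hb1 hbaδ
    rw [hsub a b ha hab hb1]
    have hmem : ∀ c : ℝ, 0 ≤ c → c ≤ 1 → c ∈ Set.uIcc (0:ℝ) 1 := by
      intro c h1 h2
      rw [Set.uIcc_of_le (by norm_num)]
      exact ⟨h1, h2⟩
    have hiab : IntervalIntegrable f volume a b :=
      hfi.mono_set (Set.uIcc_subset_uIcc (hmem a ha (by linarith))
        (hmem b (by linarith) hb1))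
    have h2 : (∫ z in a..b, f z) ≤ ∫ z in a..b, (M : ℝ) := by
      apply intervalIntegral.integral_mono_on hab hiab intervalIntegrable_const
      intro u hu
      exact hfM u ⟨le_trans ha hu.1, le_trans hu.2 hb1⟩
    have h3 : (∫ z in a..b, (M : ℝ)) = (b - a) * M := by simp [smul_eq_mul]
    nlinarith
  -- deviation of candidate 1 to x₂ - δ
  have dev1 := heq1 (x₂ - δ) ⟨by linarith, by linarith⟩
    (by rw [show x₂ - δ - x₂ = -δ by ring, abs_neg, abs_of_pos hδ])
    (le_abs.mpr (Or.inr (by linarith)))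
  rw [util_left f (x₂ - δ) x₂ x₃ (by linarith) hx23,
    util_left f x₁ x₂ x₃ hx12 hx23] at dev1
  -- deviation of candidate 3 to x₂ + δ
  have dev3 := heq3 (x₂ + δ) ⟨by linarith, by linarith⟩
    (le_abs.mpr (Or.inl (by linarith)))
    (by rw [show x₂ + δ - x₂ = δ by ring, abs_of_pos hδ])
  rw [util_right f (x₂ + δ) x₁ x₂ hx12 (by linarith),
    util_right f x₃ x₁ x₂ hx12 hx23] at dev3
  -- deviations of candidate 2
  have dev2a := heq2 (x₁ + δ) ⟨by linarith, by linarith⟩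
    (by rw [show x₁ + δ - x₁ = δ by ring, abs_of_pos hδ])
    (le_abs.mpr (Or.inr (by linarith)))
  rw [util_mid f x₁ x₃ (x₁ + δ) (by linarith) (by linarith),
    util_mid f x₁ x₃ x₂ hx12 hx23] at dev2a
  have dev2b := heq2 (x₃ - δ) ⟨by linarith, by linarith⟩
    (le_abs.mpr (Or.inl (by linarith)))
    (by rw [show x₃ - δ - x₃ = -δ by ring, abs_neg, abs_of_pos hδ])
  rw [util_mid f x₁ x₃ (x₃ - δ) (by linarith) (by linarith),
    util_mid f x₁ x₃ x₂ hx12 hx23] at dev2b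
  -- lipschitz / monotonicity facts
  have c1 : Fcdf f ((x₂ + x₁) / 2) = Fcdf f ((x₁ + x₂) / 2) :=
    congrArg (Fcdf f) (by ring)
  have c2 : Fcdf f ((x₃ + x₂) / 2) = Fcdf f ((x₂ + x₃) / 2) :=
    congrArg (Fcdf f) (by ring)
  have A2 : Fcdf f x₂ - Fcdf f ((x₂ - δ + x₂) / 2) ≤ M * δ :=
    key _ _ (by linarith) (by linarith) (by linarith) (by linarith)
  have B2 : Fcdf f ((x₂ + δ + x₂) / 2) - Fcdf f x₂ ≤ M * δ :=
    key _ _ (by linarith) (by linarith) (by linarith) (by linarith)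
  have m1 : Fcdf f ((x₁ + x₃) / 2) ≤ Fcdf f ((x₁ + δ + x₃) / 2) :=
    hmono _ _ (by linarith) (by linarith) (by linarith)
  have k1 : Fcdf f ((x₁ + δ + x₁) / 2) - Fcdf f x₁ ≤ M * δ :=
    key _ _ (by linarith) (by linarith) (by linarith) (by linarith)
  have m2 : Fcdf f ((x₃ - δ + x₁) / 2) ≤ Fcdf f ((x₁ + x₃) / 2) :=
    hmono _ _ (by linarith) (by linarith) (by linarith)
  have k2 : Fcdf f x₃ - Fcdf f ((x₃ - δ + x₃) / 2) ≤ M * δ :=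
    key _ _ (by linarith) (by linarith) (by linarith) (by linarith)
  constructor
  · linarith
  · linarith
end

section
/- In the shared-location model with m = 3 candidates: if X = (x₁, x₂, x₃) with x₁ = x₂ < x₃ is an ε-equilibrium, then F(x₁) ≤ 3ε, the utility of each candidate located at x₁ satisfies U₁(X) = F((x₁ + x₃)/2)/2 ≤ 2ε, and 1 − F(x₃) ≤ 3ε. -/
open MeasureTheory Classical

lemma range_vec3 {α : Type*} (a b c : α) : Set.range ![a,b,c] = {a,b,c} := by
  ext s
  constructor
  · rintro ⟨i, rfl⟩; fin_cases i <;> simp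
  · intro h
    rcases h with rfl | rfl | rfl
    exacts [⟨0, rfl⟩, ⟨1, rfl⟩, ⟨2, rfl⟩]

lemma card_subtype_eq (P : Fin 3 → Prop) (s : Set (Fin 3)) (h : {j | P j} = s) :
    Nat.card {j // P j} = s.ncard := by
  subst h; exact Nat.card_coe_set_eq _


lemma util_left1 (f : ℝ → ℝ) (p r : ℝ) (S : Set ℝ)
    (h1 : {s ∈ S | p < s} = {r}) (h2 : {s ∈ S | s < p} = ∅) :
    util f p S = Fcdf f ((p + r) / 2) := by
  unfold util
  rw [h1, h2, if_pos (Set.singleton_nonempty r), if_neg (by simp), csInf_singleton,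
    Fcdf_zero, sub_zero]

lemma util_left2 (f : ℝ → ℝ) (p r r' : ℝ) (S : Set ℝ)
    (h1 : {s ∈ S | p < s} = {r, r'}) (hrr : r ≤ r') (h2 : {s ∈ S | s < p} = ∅) :
    util f p S = Fcdf f ((p + r) / 2) := by
  unfold util
  rw [h1, h2, if_pos (Set.insert_nonempty r {r'}), if_neg (by simp), csInf_pair,
    inf_eq_left.mpr hrr, Fcdf_zero, sub_zero]

lemma util_right1 (f : ℝ → ℝ) (p r : ℝ) (S : Set ℝ)
    (h1 : {s ∈ S | p < s} = ∅) (h2 : {s ∈ S | s < p} = {r}) :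
    util f p S = Fcdf f 1 - Fcdf f ((p + r) / 2) := by
  unfold util
  rw [h1, h2, if_neg (by simp), if_pos (Set.singleton_nonempty r), csSup_singleton]

lemma util_right2 (f : ℝ → ℝ) (p r r' : ℝ) (S : Set ℝ)
    (h1 : {s ∈ S | p < s} = ∅) (h2 : {s ∈ S | s < p} = {r, r'}) (hrr : r ≤ r') :
    util f p S = Fcdf f 1 - Fcdf f ((p + r') / 2) := by
  unfold util
  rw [h1, h2, if_neg (by simp), if_pos (Set.insert_nonempty r {r'}), csSup_pair,
    sup_eq_right.mpr hrr]

lemma Fcdf_sub (f : ℝ → ℝ) (hfi : IntervalIntegrable f volume 0 1)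
    {a b : ℝ} (ha : 0 ≤ a) (hab : a ≤ b) (hb : b ≤ 1) :
    Fcdf f b - Fcdf f a = ∫ z in a..b, f z := by
  have h1 : IntervalIntegrable f volume 0 b :=
    hfi.mono_set (by
      rw [Set.uIcc_of_le (ha.trans hab), Set.uIcc_of_le zero_le_one]
      exact Set.Icc_subset_Icc le_rfl hb)
  have h2 : IntervalIntegrable f volume 0 a :=
    hfi.mono_set (by
      rw [Set.uIcc_of_le ha, Set.uIcc_of_le zero_le_one]
      exact Set.Icc_subset_Icc le_rfl (hab.trans hb))
  exact intervalIntegral.integral_interval_sub_left h1 h2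

lemma Fcdf_mono (f : ℝ → ℝ) (hfi : IntervalIntegrable f volume 0 1)
    (hf0 : ∀ z ∈ Set.Icc (0:ℝ) 1, 0 ≤ f z)
    {a b : ℝ} (ha : 0 ≤ a) (hab : a ≤ b) (hb : b ≤ 1) :
    Fcdf f a ≤ Fcdf f b := by
  have := Fcdf_sub f hfi ha hab hb
  have h2 : (0:ℝ) ≤ ∫ z in a..b, f z :=
    intervalIntegral.integral_nonneg hab
      (fun u hu => hf0 u ⟨ha.trans hu.1, hu.2.trans hb⟩)
  linarith

lemma Fcdf_lipschitz (f : ℝ → ℝ) (M : ℝ) (hfi : IntervalIntegrable f volume 0 1)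
    (hfM : ∀ z ∈ Set.Icc (0:ℝ) 1, f z ≤ M)
    {a b : ℝ} (ha : 0 ≤ a) (hab : a ≤ b) (hb : b ≤ 1) :
    Fcdf f b - Fcdf f a ≤ M * (b - a) := by
  rw [Fcdf_sub f hfi ha hab hb]
  have hint : IntervalIntegrable f volume a b :=
    hfi.mono_set (by
      rw [Set.uIcc_of_le hab, Set.uIcc_of_le zero_le_one]
      exact Set.Icc_subset_Icc ha hb)
  calc (∫ z in a..b, f z) ≤ ∫ _ in a..b, M :=
        intervalIntegral.integral_mono_on hab hint intervalIntegrable_const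
          (fun u hu => hfM u ⟨ha.trans hu.1, hu.2.trans hb⟩)
    _ = M * (b - a) := by rw [intervalIntegral.integral_const, smul_eq_mul, mul_comm]


/-- Shared-location model: utility of candidate `i` in the profile `x`. The group of
candidates sharing the position `x i` splits equally the voters between the midpoint
with the nearest distinct position to the left (or `0` if none) and the midpoint with
the nearest distinct position to the right (or `1` if none). -/
noncomputable def utilShared (f : ℝ → ℝ) {m : ℕ} (x : Fin m → ℝ) (i : Fin m) : ℝ :=
  util f (x i) (Set.range x) / (Nat.card {j : Fin m // x j = x i} : ℝ)

lemma utilShared_pair_left (f : ℝ → ℝ) (a c : ℝ) (hac : a < c) :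
    utilShared f ![a,a,c] 0 = Fcdf f ((a+c)/2) / 2 := by
  have e1 : {s ∈ ({a,c} : Set ℝ) | a < s} = {c} := by
    ext s
    simp only [Set.mem_setOf_eq, Set.mem_insert_iff, Set.mem_singleton_iff]
    constructor
    · rintro ⟨rfl | rfl, h⟩
      · exact absurd h (lt_irrefl _)
      · rfl
    · rintro rfl; exact ⟨Or.inr rfl, hac⟩
  have e2 : {s ∈ ({a,c} : Set ℝ) | s < a} = ∅ := by
    ext s
    simp only [Set.mem_setOf_eq, Set.mem_insert_iff, Set.mem_singleton_iff,
      Set.mem_empty_iff_false, iff_false, not_and]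
    rintro (rfl | rfl)
    · exact lt_irrefl _
    · exact fun h => absurd (h.trans hac) (lt_irrefl _)
  have e3 : {j : Fin 3 | ![a,a,c] j = a} = ({0,1} : Set (Fin 3)) := by
    ext j; fin_cases j <;> simp [hac.ne']
  show util f a (Set.range ![a,a,c]) / (Nat.card {j : Fin 3 // ![a,a,c] j = a} : ℝ) = _
  rw [range_vec3, Set.insert_idem, util_left1 f a c _ e1 e2, card_subtype_eq _ _ e3,
    Set.ncard_pair (by decide : (0 : Fin 3) ≠ 1)]
  norm_num

lemma utilShared_pair_right (f : ℝ → ℝ) (a c : ℝ) (hac : a < c) :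
    utilShared f ![a,a,c] 2 = Fcdf f 1 - Fcdf f ((c+a)/2) := by
  have e1 : {s ∈ ({a,c} : Set ℝ) | c < s} = ∅ := by
    ext s
    simp only [Set.mem_setOf_eq, Set.mem_insert_iff, Set.mem_singleton_iff,
      Set.mem_empty_iff_false, iff_false, not_and]
    rintro (rfl | rfl)
    · exact fun h => absurd (hac.trans h) (lt_irrefl _)
    · exact lt_irrefl _
  have e2 : {s ∈ ({a,c} : Set ℝ) | s < c} = {a} := by
    ext s
    simp only [Set.mem_setOf_eq, Set.mem_insert_iff, Set.mem_singleton_iff]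
    constructor
    · rintro ⟨rfl | rfl, h⟩
      · rfl
      · exact absurd h (lt_irrefl _)
    · rintro rfl; exact ⟨Or.inl rfl, hac⟩
  have e3 : {j : Fin 3 | ![a,a,c] j = c} = ({2} : Set (Fin 3)) := by
    ext j; fin_cases j <;> simp [hac.ne]
  show util f c (Set.range ![a,a,c]) / (Nat.card {j : Fin 3 // ![a,a,c] j = c} : ℝ) = _
  rw [range_vec3, Set.insert_idem, util_right1 f c a _ e1 e2, card_subtype_eq _ _ e3,
    Set.ncard_singleton]
  norm_num

lemma utilShared_devL (f : ℝ → ℝ) (x' a c : ℝ) (h1 : x' < a) (h2 : a < c) :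
    utilShared f ![x',a,c] 0 = Fcdf f ((x'+a)/2) := by
  have e1 : {s ∈ ({x',a,c} : Set ℝ) | x' < s} = {a, c} := by
    ext s
    simp only [Set.mem_setOf_eq, Set.mem_insert_iff, Set.mem_singleton_iff]
    constructor
    · rintro ⟨rfl | rfl | rfl, h⟩
      · exact absurd h (lt_irrefl _)
      · exact Or.inl rfl
      · exact Or.inr rfl
    · rintro (rfl | rfl)
      · exact ⟨Or.inr (Or.inl rfl), h1⟩
      · exact ⟨Or.inr (Or.inr rfl), h1.trans h2⟩
  have e2 : {s ∈ ({x',a,c} : Set ℝ) | s < x'} = ∅ := by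
    ext s
    simp only [Set.mem_setOf_eq, Set.mem_insert_iff, Set.mem_singleton_iff,
      Set.mem_empty_iff_false, iff_false, not_and]
    rintro (rfl | rfl | rfl)
    · exact lt_irrefl _
    · exact fun h => absurd (h.trans h1) (lt_irrefl _)
    · exact fun h => absurd (h.trans (h1.trans h2)) (lt_irrefl _)
  have e3 : {j : Fin 3 | ![x',a,c] j = x'} = ({0} : Set (Fin 3)) := by
    ext j; fin_cases j <;> simp [h1.ne', (h1.trans h2).ne']
  show util f x' (Set.range ![x',a,c]) / (Nat.card {j : Fin 3 // ![x',a,c] j = x'} : ℝ) = _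
  rw [range_vec3, util_left2 f x' a c _ e1 h2.le e2, card_subtype_eq _ _ e3,
    Set.ncard_singleton]
  norm_num

lemma utilShared_devR (f : ℝ → ℝ) (x' a c : ℝ) (h2 : a < c) (h1 : c < x') :
    utilShared f ![x',a,c] 0 = Fcdf f 1 - Fcdf f ((x'+c)/2) := by
  have e1 : {s ∈ ({x',a,c} : Set ℝ) | x' < s} = ∅ := by
    ext s
    simp only [Set.mem_setOf_eq, Set.mem_insert_iff, Set.mem_singleton_iff,
      Set.mem_empty_iff_false, iff_false, not_and]
    rintro (rfl | rfl | rfl)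
    · exact lt_irrefl _
    · exact fun h => absurd ((h2.trans h1).trans h) (lt_irrefl _)
    · exact fun h => absurd (h1.trans h) (lt_irrefl _)
  have e2 : {s ∈ ({x',a,c} : Set ℝ) | s < x'} = {a, c} := by
    ext s
    simp only [Set.mem_setOf_eq, Set.mem_insert_iff, Set.mem_singleton_iff]
    constructor
    · rintro ⟨rfl | rfl | rfl, h⟩
      · exact absurd h (lt_irrefl _)
      · exact Or.inl rfl
      · exact Or.inr rfl
    · rintro (rfl | rfl)
      · exact ⟨Or.inr (Or.inl rfl), h2.trans h1⟩
      · exact ⟨Or.inr (Or.inr rfl), h1⟩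
  have e3 : {j : Fin 3 | ![x',a,c] j = x'} = ({0} : Set (Fin 3)) := by
    ext j; fin_cases j <;> simp [((h2.trans h1)).ne, h1.ne]
  show util f x' (Set.range ![x',a,c]) / (Nat.card {j : Fin 3 // ![x',a,c] j = x'} : ℝ) = _
  rw [range_vec3, util_right2 f x' a c _ e1 e2 h2.le, card_subtype_eq _ _ e3,
    Set.ncard_singleton]
  norm_num


/-- Shared-location model: the profile `x` is an `ε`-equilibrium if no candidate can
move to any location in `[0,1]` (possibly coinciding with other candidates) and increase
his utility by more than `ε`. -/
def IsEquilibriumShared (f : ℝ → ℝ) {m : ℕ} (x : Fin m → ℝ) (ε : ℝ) : Prop :=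
  ∀ i : Fin m, ∀ x' ∈ Set.Icc (0:ℝ) 1,
    utilShared f (Function.update x i x') i ≤ utilShared f x i + ε

/-- Shared-location model, three candidates: if `x₁ = x₂ < x₃` is an
`ε`-equilibrium, then `F(x₁) ≤ 3ε`, candidate 1's utility equals `F((x₁+x₃)/2)/2` and is
at most `2ε`, and `1 − F(x₃) ≤ 3ε`. -/
theorem stmt17 (f : ℝ → ℝ) (M ε x₁ x₂ x₃ : ℝ)
    (hM : 0 < M)
    (hfi : IntervalIntegrable f volume 0 1)
    (hf0 : ∀ z ∈ Set.Icc (0:ℝ) 1, 0 ≤ f z)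
    (hfM : ∀ z ∈ Set.Icc (0:ℝ) 1, f z ≤ M)
    (hf1 : (∫ z in (0:ℝ)..1, f z) = 1)
    (h0 : 0 ≤ x₁) (h12 : x₁ = x₂) (h23 : x₂ < x₃) (h3 : x₃ ≤ 1)
    (heq : IsEquilibriumShared f ![x₁, x₂, x₃] ε) :
    Fcdf f x₁ ≤ 3 * ε ∧
    utilShared f ![x₁, x₂, x₃] 0 = Fcdf f ((x₁ + x₃) / 2) / 2 ∧
    Fcdf f ((x₁ + x₃) / 2) / 2 ≤ 2 * ε ∧
    1 - Fcdf f x₃ ≤ 3 * ε := by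
  subst h12
  have hx1le1 : x₁ ≤ 1 := (h23.trans_le h3).le
  have hF1 : Fcdf f 1 = 1 := hf1
  have hupd0 : ∀ x' : ℝ, Function.update ![x₁,x₁,x₃] 0 x' = ![x',x₁,x₃] := by
    intro x'; funext j; fin_cases j <;> simp [Function.update]
  have hupd2 : ∀ x' : ℝ, Function.update ![x₁,x₁,x₃] 2 x' = ![x₁,x₁,x'] := by
    intro x'; funext j; fin_cases j <;> simp [Function.update]
  have hU0 : utilShared f ![x₁,x₁,x₃] 0 = Fcdf f ((x₁+x₃)/2) / 2 :=
    utilShared_pair_left f x₁ x₃ h23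
  have hU2 : utilShared f ![x₁,x₁,x₃] 2 = 1 - Fcdf f ((x₁+x₃)/2) := by
    rw [utilShared_pair_right f x₁ x₃ h23, hF1]
    ring_nf
  have hεnn : 0 ≤ ε := by
    have h := heq 0 x₁ ⟨h0, hx1le1⟩
    rw [hupd0 x₁] at h
    have : (![x₁,x₁,x₃] : Fin 3 → ℝ) = ![x₁,x₁,x₃] := rfl
    linarith [h]
  have hm0 : (0:ℝ) ≤ (x₁+x₃)/2 := by linarith
  have hm1 : (x₁+x₃)/2 ≤ 1 := by linarith
  have hUnn : 0 ≤ Fcdf f ((x₁+x₃)/2) := by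
    have h := Fcdf_mono f hfi hf0 le_rfl hm0 hm1
    rw [Fcdf_zero] at h; exact h
  -- Step A : F x₁ ≤ F m / 2 + ε
  have hA : Fcdf f x₁ ≤ Fcdf f ((x₁+x₃)/2) / 2 + ε := by
    rcases eq_or_lt_of_le h0 with h | hx1pos
    · subst h; rw [Fcdf_zero]; linarith
    · apply le_of_forall_pos_le_add
      intro η hη
      set δ := min x₁ (2*η/M) with hδ
      have hδpos : 0 < δ := lt_min hx1pos (by positivity)
      have hδle : δ ≤ x₁ := min_le_left _ _
      have hδle' : δ ≤ 2*η/M := min_le_right _ _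
      set x' := x₁ - δ with hx'
      have hx'0 : 0 ≤ x' := by simp only [hx']; linarith
      have hx'lt : x' < x₁ := by simp only [hx']; linarith
      have h := heq 0 x' ⟨hx'0, by linarith⟩
      rw [hupd0 x', utilShared_devL f x' x₁ x₃ hx'lt h23, hU0] at h
      have hlip := Fcdf_lipschitz f M hfi hfM (a := (x'+x₁)/2) (b := x₁)
        (by simp only [hx']; linarith) (by simp only [hx']; linarith) hx1le1
      have hb : M * (x₁ - (x'+x₁)/2) ≤ η := by
        have he : x₁ - (x'+x₁)/2 = δ/2 := by simp only [hx']; ring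
        rw [he]
        calc M * (δ/2) ≤ M * ((2*η/M)/2) := by
              apply mul_le_mul_of_nonneg_left (by linarith) hM.le
          _ = η := by field_simp
      linarith
  -- Step B : F m ≤ F x₁ + ε
  have hB : Fcdf f ((x₁+x₃)/2) ≤ Fcdf f x₁ + ε := by
    apply le_of_forall_pos_le_add
    intro η hη
    set δ := min ((x₃-x₁)/2) (2*η/M) with hδ
    have hδpos : 0 < δ := lt_min (by linarith) (by positivity)
    have hδle : δ ≤ (x₃-x₁)/2 := min_le_left _ _
    have hδle' : δ ≤ 2*η/M := min_le_right _ _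
    set x' := x₁ + δ with hx'
    have hx'gt : x₁ < x' := by simp only [hx']; linarith
    have hx'le1 : x' ≤ 1 := by simp only [hx']; linarith
    have h := heq 2 x' ⟨by linarith, hx'le1⟩
    rw [hupd2 x', utilShared_pair_right f x₁ x' hx'gt, hF1, hU2] at h
    -- h : 1 - Fcdf f ((x'+x₁)/2) ≤ (1 - Fcdf f ((x₁+x₃)/2)) + ε
    have hlip := Fcdf_lipschitz f M hfi hfM (a := x₁) (b := (x'+x₁)/2)
      h0 (by simp only [hx']; linarith) (by simp only [hx']; linarith)
    have hb : M * ((x'+x₁)/2 - x₁) ≤ η := by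
      have he : (x'+x₁)/2 - x₁ = δ/2 := by simp only [hx']; ring
      rw [he]
      calc M * (δ/2) ≤ M * ((2*η/M)/2) := by
            apply mul_le_mul_of_nonneg_left (by linarith) hM.le
        _ = η := by field_simp
    linarith
  -- Step C : 1 - F x₃ ≤ F m / 2 + ε
  have hC : 1 - Fcdf f x₃ ≤ Fcdf f ((x₁+x₃)/2) / 2 + ε := by
    rcases eq_or_lt_of_le h3 with h | hx3lt
    · subst h; rw [hF1]; linarith
    · apply le_of_forall_pos_le_add
      intro η hη
      set δ := min (1-x₃) (2*η/M) with hδ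
      have hδpos : 0 < δ := lt_min (by linarith) (by positivity)
      have hδle : δ ≤ 1-x₃ := min_le_left _ _
      have hδle' : δ ≤ 2*η/M := min_le_right _ _
      set x' := x₃ + δ with hx'
      have hx'gt : x₃ < x' := by simp only [hx']; linarith
      have hx'le1 : x' ≤ 1 := by simp only [hx']; linarith
      have h := heq 0 x' ⟨by linarith, hx'le1⟩
      rw [hupd0 x', utilShared_devR f x' x₁ x₃ h23 hx'gt, hF1, hU0] at h
      have hx30 : 0 ≤ x₃ := h0.trans h23.le
      have hlip := Fcdf_lipschitz f M hfi hfM (a := x₃) (b := (x'+x₃)/2)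
        hx30 (by simp only [hx']; linarith) (by simp only [hx']; linarith)
      have hb : M * ((x'+x₃)/2 - x₃) ≤ η := by
        have he : (x'+x₃)/2 - x₃ = δ/2 := by simp only [hx']; ring
        rw [he]
        calc M * (δ/2) ≤ M * ((2*η/M)/2) := by
              apply mul_le_mul_of_nonneg_left (by linarith) hM.le
          _ = η := by field_simp
      linarith
  exact ⟨by linarith, hU0, by linarith, by linarith⟩
end
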